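/- For A ∈ ℂ^{m×n} and Hermitian B ∈ ℂ^{m×m}, the equation AXA* = B has a Hermitian solution X if and only if the column space of B is contained in the column space of A (equivalently AA†B = B); moreover, when this holds, X = A†B(A†)* + (I − A†A)V + V*(I − A†A) is a Hermitian solution for every V with the appropriate symmetry making X Hermitian, and in particular X₀ = A†B(A†)* is a Hermitian solution. -/

import Mathlib

/-!
For Hermitian `G`, applying `t ↦ t⁻¹` to the eigenvalues (with Lean's `0⁻¹ = 0`) gives a
Moore–Penrose inverse of `G`; for arbitrary `A`, a Moore–Penrose inverse is `(Aᴴ A)⁺ Aᴴ`.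

If `A X Aᴴ = B` then the range of `B` lies in that of `A`. Conversely `A A†` is the identity on
the range of `A`, so `A A† B = B`; as `A A†` and `B` are Hermitian also `B A A† = B`, whence
`A (A† B A†ᴴ) Aᴴ = A A† B (A A†)ᴴ = B`. The extra terms `(1 - A†A) V` and `Vᴴ (1 - A†A)` are
annihilated by `A` on the left and `Aᴴ` on the right.
-/

open Matrix
open scoped ComplexOrder

def IsMoorePenrose {m n : Type*} [Fintype m] [Fintype n]
    (A : Matrix m n ℂ) (X : Matrix n m ℂ) : Prop :=
  A * X * A = A ∧ X * A * X = X ∧ (A * X)ᴴ = A * X ∧ (X * A)ᴴ = X * A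

open Classical in
noncomputable def pinv {m n : Type*} [Fintype m] [Fintype n]
    (A : Matrix m n ℂ) : Matrix n m ℂ :=
  if h : ∃ X, IsMoorePenrose A X then h.choose else 0

theorem Matrix.IsHermitian.isMoorePenrose_cfc_inv {n : Type*} [Fintype n] [DecidableEq n]
    {G : Matrix n n ℂ} (hG : G.IsHermitian) : IsMoorePenrose G (cfc (·⁻¹ : ℝ → ℝ) G) := by
  have hcont (f : ℝ → ℝ) : ContinuousOn f (spectrum ℝ G) := G.finite_real_spectrum.continuousOn f
  have hcfc_mul (f g : ℝ → ℝ) : cfc (fun x => f x * g x) G = cfc f G * cfc g G :=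
    cfc_mul f g G (hcont f) (hcont g)
  have hY : (cfc (·⁻¹ : ℝ → ℝ) G)ᴴ = cfc (·⁻¹ : ℝ → ℝ) G :=
    cfc_predicate (R := ℝ) (p := IsSelfAdjoint) _ G
  have hcomm : Commute G (cfc (·⁻¹ : ℝ → ℝ) G) := by
    simpa only [cfc_id' ℝ G] using cfc_commute_cfc (R := ℝ) (fun x => x) (·⁻¹) G
  refine ⟨?_, ?_, ?_, ?_⟩
  · calc G * cfc (·⁻¹) G * G = cfc (fun x : ℝ => x * x⁻¹ * x) G := by
          rw [hcfc_mul, hcfc_mul, cfc_id' ℝ G]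
      _ = G := by simp only [mul_inv_mul_cancel, cfc_id' ℝ G]
  · calc cfc (·⁻¹) G * G * cfc (·⁻¹) G = cfc (fun x : ℝ => x⁻¹ * x * x⁻¹) G := by
          rw [hcfc_mul, hcfc_mul, cfc_id' ℝ G]
      _ = cfc (·⁻¹) G := by congr 1; funext x; simpa using mul_inv_mul_cancel x⁻¹
  · rw [conjTranspose_mul, hY, hG.eq, hcomm.eq]
  · rw [conjTranspose_mul, hY, hG.eq, hcomm.eq]

theorem Matrix.range_mulVecLin_mul_le {R l m n : Type*} [CommSemiring R] [Fintype m] [Fintype n]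
    (A : Matrix l m R) (C : Matrix m n R) :
    LinearMap.range (A * C).mulVecLin ≤ LinearMap.range A.mulVecLin := by
  rw [mulVecLin_mul]
  exact LinearMap.range_comp_le_range _ _

section MoorePenrose

variable {m n : Type*} [Fintype m] [Fintype n] {A : Matrix m n ℂ}

theorem IsMoorePenrose.of_conjTranspose_mul_self {Y : Matrix n n ℂ} (hY : Y.IsHermitian)
    (hGY : IsMoorePenrose (Aᴴ * A) Y) : IsMoorePenrose A (Y * Aᴴ) := by
  classical
  obtain ⟨hGYG, hYGY, hGYh, -⟩ := hGY
  have hAYG : A * Y * (Aᴴ * A) = A := by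
    have : Aᴴ * A * (Y * (Aᴴ * A) - 1) = 0 := by
      rw [Matrix.mul_sub, Matrix.mul_one, ← Matrix.mul_assoc, hGYG, sub_self]
    rw [conjTranspose_mul_self_mul_eq_zero, Matrix.mul_sub, Matrix.mul_one, sub_eq_zero] at this
    rwa [← Matrix.mul_assoc] at this
  have hYG : Y * (Aᴴ * A) = Aᴴ * A * Y := by
    rw [← hGYh, conjTranspose_mul, hY.eq, (isHermitian_conjTranspose_mul_self A).eq]
  refine ⟨?_, ?_, ?_, ?_⟩
  · simpa only [Matrix.mul_assoc] using hAYG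
  · simpa only [Matrix.mul_assoc] using congrArg (· * Aᴴ) hYGY
  · simpa only [Matrix.mul_assoc] using (isHermitian_mul_mul_conjTranspose A hY).eq
  · rw [Matrix.mul_assoc, conjTranspose_mul, hY.eq, (isHermitian_conjTranspose_mul_self A).eq, hYG]

theorem exists_isMoorePenrose (A : Matrix m n ℂ) : ∃ X, IsMoorePenrose A X := by
  classical
  have hG := isHermitian_conjTranspose_mul_self A
  exact ⟨_, IsMoorePenrose.of_conjTranspose_mul_self (cfc_predicate _ _) hG.isMoorePenrose_cfc_inv⟩

theorem pinv_isMoorePenrose (A : Matrix m n ℂ) : IsMoorePenrose A (pinv A) := by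
  rw [pinv, dif_pos (exists_isMoorePenrose A)]
  exact (exists_isMoorePenrose A).choose_spec

namespace IsMoorePenrose

variable {X : Matrix n m ℂ} (hX : IsMoorePenrose A X)
include hX

theorem mul_mulVec_of_mem_range {y : m → ℂ} (hy : y ∈ LinearMap.range A.mulVecLin) :
    (A * X) *ᵥ y = y := by
  obtain ⟨w, rfl⟩ := hy
  simp only [mulVecLin_apply, mulVec_mulVec, hX.1]

theorem range_le_iff {k : Type*} [Fintype k] (B : Matrix m k ℂ) :
    LinearMap.range B.mulVecLin ≤ LinearMap.range A.mulVecLin ↔ A * X * B = B := by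
  refine ⟨fun h => ext_iff_mulVec.2 fun v => ?_, fun h => ?_⟩
  · rw [← mulVec_mulVec]
    exact hX.mul_mulVec_of_mem_range (h ⟨v, rfl⟩)
  · rw [← h, Matrix.mul_assoc]
    exact range_mulVecLin_mul_le A (X * B)

theorem mul_conjugate_mul_conjTranspose_eq {B : Matrix m m ℂ} (hB : B.IsHermitian)
    (h : A * X * B = B) : A * (X * B * Xᴴ) * Aᴴ = B := by
  have hBAX : B * (A * X) = B := by
    simpa only [conjTranspose_mul, hX.2.2.1, hB.eq] using congrArg conjTranspose h
  calc A * (X * B * Xᴴ) * Aᴴ = A * X * B * (A * X)ᴴ := by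
        simp only [conjTranspose_mul, Matrix.mul_assoc]
    _ = B := by rw [h, hX.2.2.1, hBAX]

theorem mul_one_sub_mul_eq_zero [DecidableEq n] : A * (1 - X * A) = 0 := by
  rw [Matrix.mul_sub, Matrix.mul_one, ← Matrix.mul_assoc, hX.1, sub_self]

theorem one_sub_mul_mul_conjTranspose_eq_zero [DecidableEq n] : (1 - X * A) * Aᴴ = 0 := by
  simpa only [conjTranspose_mul, conjTranspose_sub, conjTranspose_one, hX.2.2.2,
    conjTranspose_zero] using congrArg conjTranspose hX.mul_one_sub_mul_eq_zero

theorem mul_add_one_sub_mul_mul_conjTranspose [DecidableEq n] (X₀ V : Matrix n n ℂ) :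
    A * (X₀ + (1 - X * A) * V + Vᴴ * (1 - X * A)) * Aᴴ = A * X₀ * Aᴴ := by
  rw [Matrix.mul_add, Matrix.mul_add, Matrix.add_mul, Matrix.add_mul, ← Matrix.mul_assoc A _ V,
    hX.mul_one_sub_mul_eq_zero, Matrix.mul_assoc A (Vᴴ * _), Matrix.mul_assoc Vᴴ,
    hX.one_sub_mul_mul_conjTranspose_eq_zero]
  simp only [Matrix.zero_mul, Matrix.mul_zero, add_zero]

end IsMoorePenrose

end MoorePenrose

theorem hermitian_solution_AXAstar_eq_B {m n : ℕ} (A : Matrix (Fin m) (Fin n) ℂ)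
    (B : Matrix (Fin m) (Fin m) ℂ) (hB : B.IsHermitian) :
    ((∃ X : Matrix (Fin n) (Fin n) ℂ, X.IsHermitian ∧ A * X * Aᴴ = B) ↔
      LinearMap.range B.mulVecLin ≤ LinearMap.range A.mulVecLin) ∧
    (LinearMap.range B.mulVecLin ≤ LinearMap.range A.mulVecLin ↔ A * pinv A * B = B) ∧
    (LinearMap.range B.mulVecLin ≤ LinearMap.range A.mulVecLin →
      ((pinv A * B * (pinv A)ᴴ).IsHermitian ∧ A * (pinv A * B * (pinv A)ᴴ) * Aᴴ = B) ∧
      ∀ V : Matrix (Fin n) (Fin n) ℂ,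
        (pinv A * B * (pinv A)ᴴ + (1 - pinv A * A) * V + Vᴴ * (1 - pinv A * A)).IsHermitian →
        A * (pinv A * B * (pinv A)ᴴ + (1 - pinv A * A) * V + Vᴴ * (1 - pinv A * A)) * Aᴴ = B) := by
  have hP := pinv_isMoorePenrose A
  have hX₀ : (pinv A * B * (pinv A)ᴴ).IsHermitian := isHermitian_mul_mul_conjTranspose _ hB
  have hsol (h : LinearMap.range B.mulVecLin ≤ LinearMap.range A.mulVecLin) :
      A * (pinv A * B * (pinv A)ᴴ) * Aᴴ = B :=
    hP.mul_conjugate_mul_conjTranspose_eq hB ((hP.range_le_iff B).1 h)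
  refine ⟨⟨?_, fun h => ⟨_, hX₀, hsol h⟩⟩, hP.range_le_iff B,
    fun h => ⟨⟨hX₀, hsol h⟩, fun V _ => ?_⟩⟩
  · rintro ⟨X, -, rfl⟩
    rw [Matrix.mul_assoc]
    exact range_mulVecLin_mul_le A (X * Aᴴ)
  · rw [hP.mul_add_one_sub_mul_mul_conjTranspose, hsol h]
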